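/- arXiv:1202.0576 — 4 statements merged into one kernel-verified Lean document; each statement's English description precedes it below -/
import Mathlib

section
/- Let N ≥ 1, s ∈ (0,1), R > 0. Set σ = 2s if s < 1/2, σ = 1/2 if s = 1/2, and σ = 2s−1 if s > 1/2. Then there exists C = C(N,σ) > 0 such that ∫_{B_R} ∫_{B_{R+1}∖B_R} (|x|−R)² / |x−y|^{N+2s} dx dy ≤ C R^{N−σ}. -/
/-!
For `x` in the annulus and `‖y‖ < R` one has `0 ≤ ‖x‖ - R ≤ min 1 ‖x - y‖`, hence
`(‖x‖ - R)² ≤ ‖x - y‖ ^ (2s - σ)` because `0 ≤ 2s - σ ≤ 2`, and the integrand is at most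
`‖x - y‖ ^ (-(N + σ))`. The annulus lies outside `ball y (R - ‖y‖)`, so polar coordinates bound
the inner integral by a multiple of `(R - ‖y‖) ^ (-σ)`; since `σ < 1` this is integrable over
`B_R`, and polar coordinates once more give the total `R ^ (N - σ)`.
-/

open MeasureTheory Metric Set
open scoped ENNReal

local notation "dim" => Module.finrank ℝ

lemma pow_pred_eq_rpow {n : ℕ} (hn : 0 < n) (t : ℝ) : t ^ (n - 1) = t ^ ((n : ℝ) - 1) := by
  rw [← Real.rpow_natCast, Nat.cast_pred hn]

lemma lintegral_Ici_rpow_of_lt {a r : ℝ} (ha : a < -1) (hr : 0 < r) :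
    ∫⁻ t in Ici r, ENNReal.ofReal (t ^ a) = ENNReal.ofReal (-r ^ (a + 1) / (a + 1)) := by
  rw [← Measure.restrict_congr_set Ioi_ae_eq_Ici, ← integral_Ioi_rpow_of_lt ha hr,
    ofReal_integral_eq_lintegral_ofReal (integrableOn_Ioi_rpow_of_lt ha hr)]
  filter_upwards [ae_restrict_mem measurableSet_Ioi] with t ht
  exact Real.rpow_nonneg (hr.trans ht).le _

lemma lintegral_Ioo_sub_rpow_of_lt {a R : ℝ} (ha : -1 < a) (hR : 0 ≤ R) :
    ∫⁻ t in Ioo 0 R, ENNReal.ofReal ((R - t) ^ a) = ENNReal.ofReal (R ^ (a + 1) / (a + 1)) := by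
  have hint : IntegrableOn (fun t : ℝ ↦ (R - t) ^ a) (Ioc 0 R) := by
    rw [← intervalIntegrable_iff_integrableOn_Ioc_of_le hR]
    simpa using
      ((intervalIntegral.intervalIntegrable_rpow' (a := 0) (b := R) ha).comp_sub_left R).symm
  rw [Measure.restrict_congr_set Ioo_ae_eq_Ioc, ← ofReal_integral_eq_lintegral_ofReal hint,
    ← intervalIntegral.integral_of_le hR, intervalIntegral.integral_comp_sub_left
      (fun t : ℝ ↦ t ^ a) R, sub_self, sub_zero, integral_rpow (.inl ha),
      Real.zero_rpow (by linarith), sub_zero]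
  filter_upwards [ae_restrict_mem measurableSet_Ioc] with t ht
  exact Real.rpow_nonneg (sub_nonneg.2 ht.2) _

lemma sq_div_rpow_add_le_rpow_neg_add {d p σ t a : ℝ} (hσp : σ ≤ p) (hpσ : p - σ ≤ 2)
    (ht : 0 < t) (ha : 0 ≤ a) (hat : a ≤ t) (ha1 : a ≤ 1) :
    a ^ 2 / t ^ (d + p) ≤ t ^ (-(d + σ)) := by
  have hm : 0 < min t 1 := lt_min ht one_pos
  rw [div_le_iff₀ (Real.rpow_pos_of_pos ht _), ← Real.rpow_add ht,
    show -(d + σ) + (d + p) = p - σ by ring]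
  calc a ^ 2 ≤ min t 1 ^ (2 : ℝ) := by
        rw [Real.rpow_two]; exact pow_le_pow_left₀ ha (le_min hat ha1) 2
    _ ≤ min t 1 ^ (p - σ) := Real.rpow_le_rpow_of_exponent_ge hm (min_le_right _ _) hpσ
    _ ≤ t ^ (p - σ) := Real.rpow_le_rpow hm.le (min_le_left _ _) (by linarith)

section AddHaar

variable {E : Type*} [NormedAddCommGroup E] [NormedSpace ℝ E] [MeasurableSpace E] [BorelSpace E]
  [FiniteDimensional ℝ E] [Nontrivial E] (μ : Measure E) [μ.IsAddHaarMeasure] {p σ R : ℝ}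

lemma lintegral_fun_norm_addHaar {g : ℝ → ℝ≥0∞} (hg : Measurable g) :
    ∫⁻ x, g ‖x‖ ∂μ =
      dim E * μ (ball 0 1) * ∫⁻ r in Ioi 0, ENNReal.ofReal (r ^ (dim E - 1)) * g r := by
  have hmg : Measurable fun x : sphere (0 : E) 1 × Ioi (0 : ℝ) ↦ g x.2 :=
    (hg.comp measurable_subtype_coe).comp measurable_snd
  calc
    ∫⁻ x, g ‖x‖ ∂μ = ∫⁻ x : ({(0)}ᶜ : Set E), g ‖x.1‖ ∂(μ.comap (↑)) := by
      rw [lintegral_subtype_comap (measurableSet_singleton _).compl fun x ↦ g ‖x‖,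
        restrict_compl_singleton]
    _ = ∫⁻ x : sphere (0 : E) 1 × Ioi (0 : ℝ), g x.2
          ∂μ.toSphere.prod (.volumeIoiPow (dim E - 1)) := by
      rw [← μ.measurePreserving_homeomorphUnitSphereProd.lintegral_comp hmg]
      simp [homeomorphUnitSphereProd]
    _ = μ.toSphere univ * ∫⁻ x : Ioi (0 : ℝ), g x ∂(.volumeIoiPow (dim E - 1)) := by
      rw [lintegral_prod _ hmg.aemeasurable]
      simp [lintegral_const, mul_comm]
    _ = _ := by
      rw [Measure.toSphere_apply_univ, Measure.volumeIoiPow,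
        lintegral_withDensity_eq_lintegral_mul _ (by fun_prop) (by fun_prop)]
      exact congrArg _ (lintegral_subtype_comap measurableSet_Ioi
        fun r ↦ ENNReal.ofReal (r ^ (dim E - 1)) * g r)

lemma setLIntegral_preimage_norm_addHaar {S : Set ℝ} (hS : MeasurableSet S) {g : ℝ → ℝ≥0∞}
    (hg : Measurable g) :
    ∫⁻ x in (‖·‖) ⁻¹' S, g ‖x‖ ∂μ =
      dim E * μ (ball 0 1) * ∫⁻ r in S ∩ Ioi 0, ENNReal.ofReal (r ^ (dim E - 1)) * g r := by
  rw [← lintegral_indicator (hS.preimage measurable_norm)]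
  refine (lintegral_congr fun x ↦ indicator_comp_right norm).trans ?_
  rw [lintegral_fun_norm_addHaar μ (hg.indicator hS), ← Measure.restrict_restrict hS,
    ← lintegral_indicator hS]
  exact congrArg _ <| lintegral_congr fun r ↦
    (indicator_mul_right S (fun r ↦ ENNReal.ofReal (r ^ (dim E - 1))) g).symm

lemma setLIntegral_compl_ball_norm_sub_rpow (hσ : 0 < σ) (hR : 0 < R) (y : E) :
    ∫⁻ x in (ball y R)ᶜ, ENNReal.ofReal (‖x - y‖ ^ (-(dim E + σ))) ∂μ =
      dim E * μ (ball 0 1) * ENNReal.ofReal (R ^ (-σ) / σ) := by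
  have hball : (ball y R)ᶜ = (· - y) ⁻¹' ((‖·‖) ⁻¹' Ici R) := by
    ext x; simp [dist_eq_norm]
  rw [hball, (measurePreserving_sub_right μ y).setLIntegral_comp_preimage_emb
      (MeasurableEquiv.subRight y).measurableEmbedding (fun z ↦ ENNReal.ofReal (‖z‖ ^ _)),
    setLIntegral_preimage_norm_addHaar μ measurableSet_Ici
      (g := fun t ↦ ENNReal.ofReal (t ^ (-(dim E + σ)))) (by fun_prop),
    inter_eq_left.2 (Ici_subset_Ioi.2 hR)]
  congr 1
  calc _ = ∫⁻ t in Ici R, ENNReal.ofReal (t ^ (-σ - 1)) := by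
        refine setLIntegral_congr_fun measurableSet_Ici fun t ht ↦ ?_
        have ht0 : 0 < t := hR.trans_le ht
        rw [← ENNReal.ofReal_mul (by positivity), pow_pred_eq_rpow Module.finrank_pos,
          ← Real.rpow_add ht0]
        ring_nf
    _ = _ := by
      rw [lintegral_Ici_rpow_of_lt (by linarith) hR, sub_add_cancel, neg_div_neg_eq]

lemma setLIntegral_ball_sub_norm_rpow_le (hσ : σ < 1) (hR : 0 < R) :
    ∫⁻ y in ball (0 : E) R, ENNReal.ofReal ((R - ‖y‖) ^ (-σ)) ∂μ ≤
      dim E * μ (ball 0 1) * ENNReal.ofReal (R ^ (dim E - σ) / (1 - σ)) := by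
  have hball : ball (0 : E) R = (‖·‖) ⁻¹' Iio R := by ext y; simp
  rw [hball, setLIntegral_preimage_norm_addHaar μ measurableSet_Iio
    (g := fun t ↦ ENNReal.ofReal ((R - t) ^ (-σ))) (by fun_prop), Iio_inter_Ioi]
  gcongr
  calc _ ≤ ∫⁻ t in Ioo 0 R,
        ENNReal.ofReal (R ^ (dim E - 1)) * ENNReal.ofReal ((R - t) ^ (-σ)) :=
        setLIntegral_mono' measurableSet_Ioo fun t ht ↦ by
          gcongr
          exacts [ht.1.le, ht.2.le]
    _ = ENNReal.ofReal (R ^ (dim E - 1)) * ENNReal.ofReal (R ^ (-σ + 1) / (-σ + 1)) := by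
      rw [lintegral_const_mul' _ _ ENNReal.ofReal_ne_top,
        lintegral_Ioo_sub_rpow_of_lt (by linarith) hR.le]
    _ = _ := by
      rw [← ENNReal.ofReal_mul (by positivity), pow_pred_eq_rpow Module.finrank_pos,
        mul_div_assoc', ← Real.rpow_add hR]
      ring_nf

lemma setLIntegral_annulus_le (hσ : 0 < σ) (hσp : σ ≤ p) (hpσ : p - σ ≤ 2) {y : E}
    (hy : ‖y‖ < R) :
    ∫⁻ x in ball 0 (R + 1) \ ball 0 R,
        ENNReal.ofReal ((‖x‖ - R) ^ 2 / ‖x - y‖ ^ (dim E + p)) ∂μ ≤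
      dim E * μ (ball 0 1) * ENNReal.ofReal ((R - ‖y‖) ^ (-σ) / σ) := by
  rw [← setLIntegral_compl_ball_norm_sub_rpow μ hσ (sub_pos.2 hy) y]
  have hxy (x : E) : ‖x‖ - ‖y‖ ≤ ‖x - y‖ := norm_sub_norm_le x y
  calc _ ≤ ∫⁻ x in ball 0 (R + 1) \ ball 0 R,
        ENNReal.ofReal (‖x - y‖ ^ (-(dim E + σ))) ∂μ :=
        setLIntegral_mono' (measurableSet_ball.diff measurableSet_ball) fun x ⟨hx, hxR⟩ ↦ by
          simp only [mem_ball_zero_iff, not_lt] at hx hxR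
          exact ENNReal.ofReal_le_ofReal <| sq_div_rpow_add_le_rpow_neg_add hσp hpσ
            (by linarith [hxy x]) (by linarith) (by linarith [hxy x]) (by linarith)
    _ ≤ _ := lintegral_mono_set fun x ⟨_, hxR⟩ ↦ by
      simp only [mem_ball, dist_eq_norm, sub_zero, not_lt, mem_compl_iff] at hxR ⊢
      linarith [hxy x]

theorem lintegral_ball_setLIntegral_annulus_le (hσ0 : 0 < σ) (hσ1 : σ < 1) (hσp : σ ≤ p)
    (hpσ : p - σ ≤ 2) (hR : 0 < R) :
    ∫⁻ y in ball 0 R, ∫⁻ x in ball 0 (R + 1) \ ball 0 R,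
        ENNReal.ofReal ((‖x‖ - R) ^ 2 / ‖x - y‖ ^ (dim E + p)) ∂μ ∂μ ≤
      (dim E * μ (ball 0 1)) ^ 2 * ENNReal.ofReal (R ^ (dim E - σ) / (σ * (1 - σ))) := by
  set c : ℝ≥0∞ := dim E * μ (ball 0 1)
  have hc : c ≠ ∞ := ENNReal.mul_ne_top (ENNReal.natCast_ne_top _) measure_ball_lt_top.ne
  calc _ ≤ ∫⁻ y in ball 0 R,
        c * ENNReal.ofReal σ⁻¹ * ENNReal.ofReal ((R - ‖y‖) ^ (-σ)) ∂μ :=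
        setLIntegral_mono' measurableSet_ball fun y hy ↦
          (setLIntegral_annulus_le μ hσ0 hσp hpσ (mem_ball_zero_iff.1 hy)).trans_eq <| by
            rw [div_eq_mul_inv,
              ENNReal.ofReal_mul (Real.rpow_nonneg (sub_nonneg.2 (mem_ball_zero_iff.1 hy).le) _)]
            ring
    _ = c * ENNReal.ofReal σ⁻¹ *
          ∫⁻ y in ball 0 R, ENNReal.ofReal ((R - ‖y‖) ^ (-σ)) ∂μ :=
        lintegral_const_mul' _ _ (ENNReal.mul_ne_top hc ENNReal.ofReal_ne_top)
    _ ≤ c * ENNReal.ofReal σ⁻¹ * (c * ENNReal.ofReal (R ^ (dim E - σ) / (1 - σ))) := by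
        gcongr; exact setLIntegral_ball_sub_norm_rpow_le μ hσ1 hR
    _ = _ := by
        rw [mul_mul_mul_comm, ← sq, ← ENNReal.ofReal_mul (by positivity)]
        congr 2
        field_simp

end AddHaar

theorem annulus_ball_estimate (N : ℕ) (hN : 1 ≤ N) (s : ℝ) (hs : 0 < s) (hs1 : s < 1)
    (σ : ℝ)
    (hσlt : s < 1/2 → σ = 2 * s)
    (hσeq : s = 1/2 → σ = 1/2)
    (hσgt : 1/2 < s → σ = 2 * s - 1) :
    ∃ C : ℝ, 0 < C ∧ ∀ R : ℝ, 0 < R →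
      (∫⁻ y in ball (0 : EuclideanSpace ℝ (Fin N)) R,
        ∫⁻ x in ball (0 : EuclideanSpace ℝ (Fin N)) (R + 1) \ ball 0 R,
          ENNReal.ofReal ((‖x‖ - R) ^ 2 / ‖x - y‖ ^ ((N : ℝ) + 2 * s)))
        ≤ ENNReal.ofReal (C * R ^ ((N : ℝ) - σ)) := by
  obtain ⟨hσ0, hσ1, hσp, hpσ⟩ : 0 < σ ∧ σ < 1 ∧ σ ≤ 2 * s ∧ 2 * s - σ ≤ 2 := by
    rcases lt_trichotomy s (1 / 2) with h | h | h
    · rw [hσlt h]; exact ⟨by linarith, by linarith, le_rfl, by linarith⟩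
    · rw [hσeq h, h]; norm_num
    · rw [hσgt h]; exact ⟨by linarith, by linarith, by linarith, by linarith⟩
  have hdim : dim (EuclideanSpace ℝ (Fin N)) = N := finrank_euclideanSpace_fin
  have : Nontrivial (EuclideanSpace ℝ (Fin N)) :=
    Module.nontrivial_of_finrank_pos (R := ℝ) (by rw [hdim]; exact hN)
  set κ := volume.real (ball (0 : EuclideanSpace ℝ (Fin N)) 1)
  have hκ : 0 < κ :=
    ENNReal.toReal_pos (measure_ball_pos _ _ one_pos).ne' measure_ball_lt_top.ne
  refine ⟨(N * κ) ^ 2 / (σ * (1 - σ)), by positivity, fun R hR ↦ ?_⟩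
  have h := lintegral_ball_setLIntegral_annulus_le
    (volume : Measure (EuclideanSpace ℝ (Fin N))) hσ0 hσ1 hσp hpσ hR
  rw [hdim] at h
  refine h.trans_eq ?_
  rw [← ofReal_measureReal, ← ENNReal.ofReal_natCast, ← ENNReal.ofReal_mul (by positivity),
    ← ENNReal.ofReal_pow (by positivity), ← ENNReal.ofReal_mul (by positivity)]
  congr 1
  ring
end

section
/- Let P, Q : ℝ → ℝ be continuous functions with P(t)/Q(t) → 0 as |t| → ∞. Let (u_n) be a sequence of measurable functions ℝᴺ → ℝ such that sup_n ∫_{ℝᴺ} |Q(u_n(x))| dx < ∞ and P(u_n(x)) → v(x) almost everywhere in ℝᴺ. Then for every bounded Borel set B ⊂ ℝᴺ, ∫_B |P(u_n(x)) − v(x)| dx → 0 as n → ∞. -/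
open MeasureTheory Filter
open scoped ENNReal Topology

theorem strauss_local (N : ℕ) (hN : 1 ≤ N)
    (P Q : ℝ → ℝ) (hP : Continuous P) (hQ : Continuous Q)
    (hPQ : ∀ ε : ℝ, 0 < ε → ∃ M : ℝ, 0 < M ∧ ∀ t : ℝ, M ≤ |t| → |P t| ≤ ε * |Q t|)
    (u : ℕ → EuclideanSpace ℝ (Fin N) → ℝ) (hu : ∀ n, Measurable (u n))
    (v : EuclideanSpace ℝ (Fin N) → ℝ)
    (hQbd : ∃ C : ℝ, ∀ n, (∫⁻ x, ENNReal.ofReal |Q (u n x)|) ≤ ENNReal.ofReal C)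
    (hconv : ∀ᵐ x : EuclideanSpace ℝ (Fin N),
      Tendsto (fun n => P (u n x)) atTop (𝓝 (v x))) :
    ∀ B : Set (EuclideanSpace ℝ (Fin N)), MeasurableSet B → Bornology.IsBounded B →
      Tendsto (fun n => ∫⁻ x in B, ENNReal.ofReal (|P (u n x) - v x|)) atTop (𝓝 0) := by
  intro B hBmeas hBbdd
  set μ : Measure (EuclideanSpace ℝ (Fin N)) := volume
  obtain ⟨C, hC⟩ := hQbd
  set f : ℕ → EuclideanSpace ℝ (Fin N) → ℝ := fun n x => P (u n x) with hf
  have hfmeas : ∀ n, Measurable (f n) := fun n => hP.measurable.comp (hu n)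
  -- measurable representative of v
  have hvae : AEMeasurable v μ :=
    aemeasurable_of_tendsto_metrizable_ae atTop (fun n => (hfmeas n).aemeasurable) hconv
  set w : EuclideanSpace ℝ (Fin N) → ℝ := hvae.mk v with hw
  have hwmeas : Measurable w := hvae.measurable_mk
  have hvw : v =ᵐ[μ] w := hvae.ae_eq_mk
  have hconvw : ∀ᵐ x ∂μ, Tendsto (fun n => f n x) atTop (𝓝 (w x)) := by
    filter_upwards [hconv, hvw] with x hx hx'
    rw [← hx']; exact hx
  -- finite measure of B
  have hBfin : μ B < ∞ := hBbdd.measure_lt_top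
  rw [ENNReal.tendsto_nhds_zero]
  intro ε hε
  -- choose a real budget r with ofReal r ≤ ε
  obtain ⟨r, hr, hrε⟩ : ∃ r : ℝ, 0 < r ∧ ENNReal.ofReal r ≤ ε := by
    rcases eq_or_ne ε ∞ with h | h
    · exact ⟨1, one_pos, by simp [h]⟩
    · exact ⟨ε.toReal, ENNReal.toReal_pos hε.ne' h, by rw [ENNReal.ofReal_toReal h]⟩
  -- constants
  set C1 : ℝ := max C 0 with hC1
  have hC1nn : 0 ≤ C1 := le_max_right _ _
  have hC' : ∀ n, (∫⁻ x, ENNReal.ofReal |Q (u n x)| ∂μ) ≤ ENNReal.ofReal C1 :=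
    fun n => le_trans (hC n) (ENNReal.ofReal_le_ofReal (le_max_left _ _))
  set ε₀ : ℝ := r / (5 * (C1 + 1)) with hε₀def
  have hε₀ : 0 < ε₀ := div_pos hr (by positivity)
  obtain ⟨M, hM, hPM⟩ := hPQ ε₀ hε₀
  -- bound for |P| on [-M, M]
  obtain ⟨K, hK⟩ := (isCompact_Icc (a := -M) (b := M)).exists_bound_of_continuousOn
    hP.continuousOn
  set K2 : ℝ := max K 0 + 1 with hK2
  have hK2pos : (0:ℝ) < K2 := by positivity
  -- pointwise bound : |P s| ≤ ε₀ * |Q s| + K2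
  have hpt : ∀ s : ℝ, |P s| ≤ ε₀ * |Q s| + K2 := by
    intro s
    rcases le_or_gt M |s| with h | h
    · have := hPM s h
      nlinarith [abs_nonneg (Q s), abs_nonneg (P s), le_max_right K 0]
    · have hs : s ∈ Set.Icc (-M) M := abs_le.mp h.le
      have := hK s hs
      rw [Real.norm_eq_abs] at this
      nlinarith [abs_nonneg (Q s), mul_nonneg hε₀.le (abs_nonneg (Q s)), le_max_left K 0]
  -- uniform integrability bound for any measurable set S
  have hUI : ∀ (S : Set (EuclideanSpace ℝ (Fin N))), ∀ n,
      (∫⁻ x in S, ENNReal.ofReal |f n x| ∂μ)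
        ≤ ENNReal.ofReal (ε₀ * C1) + ENNReal.ofReal K2 * μ S := by
    intro S n
    have h1 : (∫⁻ x in S, ENNReal.ofReal |f n x| ∂μ)
        ≤ ∫⁻ x in S, (ENNReal.ofReal ε₀ * ENNReal.ofReal |Q (u n x)|
            + ENNReal.ofReal K2) ∂μ := by
      refine lintegral_mono fun x => ?_
      rw [← ENNReal.ofReal_mul hε₀.le, ← ENNReal.ofReal_add (by positivity) hK2pos.le]
      exact ENNReal.ofReal_le_ofReal (hpt _)
    have hqm : Measurable fun x => ENNReal.ofReal |Q (u n x)| :=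
      (hQ.measurable.comp (hu n) : Measurable fun x => Q (u n x)).abs.ennreal_ofReal
    have hmeasq : Measurable fun x => ENNReal.ofReal ε₀ * ENNReal.ofReal |Q (u n x)| :=
      measurable_const.mul hqm
    rw [lintegral_add_left hmeasq, lintegral_const, lintegral_const_mul _ hqm,
      Measure.restrict_apply_univ] at h1
    refine h1.trans (add_le_add ?_ le_rfl)
    rw [ENNReal.ofReal_mul hε₀.le]
    refine mul_le_mul_right ?_ _
    exact le_trans (setLIntegral_le_lintegral _ _) (hC' n)
  -- key arithmetic facts
  have hεC : ε₀ * C1 ≤ r / 5 := by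
    rw [hε₀def]
    rw [div_mul_eq_mul_div, div_le_div_iff₀ (by positivity) (by norm_num)]
    nlinarith
  set δ : ℝ := r / (5 * K2) with hδdef
  have hδ : 0 < δ := div_pos hr (by positivity)
  -- Egorov
  obtain ⟨t, htB, htmeas, htμ, htunif⟩ := tendstoUniformlyOn_of_ae_tendsto
    (fun n => (hfmeas n).stronglyMeasurable) hwmeas.stronglyMeasurable hBmeas hBfin.ne
    (hconvw.mono fun x hx _ => hx) hδ
  have htsmall : ENNReal.ofReal K2 * μ t ≤ ENNReal.ofReal (r / 5) := by
    refine le_trans (mul_le_mul_right htμ _) ?_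
    rw [← ENNReal.ofReal_mul hK2pos.le]
    refine ENNReal.ofReal_le_ofReal ?_
    rw [hδdef]
    rw [mul_div_assoc']
    rw [div_le_div_iff₀ (by positivity) (by norm_num)]
    ring_nf
    nlinarith
  -- bound on each set-integral of |f n| over t
  have hfn_t : ∀ n, (∫⁻ x in t, ENNReal.ofReal |f n x| ∂μ)
      ≤ ENNReal.ofReal (r / 5) + ENNReal.ofReal (r / 5) := by
    intro n
    refine (hUI t n).trans (add_le_add ?_ htsmall)
    exact ENNReal.ofReal_le_ofReal hεC
  -- Fatou for w on t
  have hw_t : (∫⁻ x in t, ENNReal.ofReal |w x| ∂μ)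
      ≤ ENNReal.ofReal (r / 5) + ENNReal.ofReal (r / 5) := by
    have hle : (∫⁻ x in t, ENNReal.ofReal |w x| ∂μ)
        ≤ ∫⁻ x in t, atTop.liminf (fun n => ENNReal.ofReal |f n x|) ∂μ := by
      refine lintegral_mono_ae (ae_restrict_of_ae ?_)
      filter_upwards [hconvw] with x hx
      have : Tendsto (fun n => ENNReal.ofReal |f n x|) atTop (𝓝 (ENNReal.ofReal |w x|)) :=
        (ENNReal.continuous_ofReal.tendsto _).comp ((continuous_abs.tendsto _).comp hx)
      rw [this.liminf_eq]
    refine hle.trans ?_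
    refine le_trans (lintegral_liminf_le fun n => ((hfmeas n).abs.ennreal_ofReal)) ?_
    refine le_trans (liminf_le_liminf (Eventually.of_forall fun n => hfn_t n)) ?_
    simp
  -- uniform convergence on B \ t
  rw [Metric.tendstoUniformlyOn_iff] at htunif
  set η : ℝ := r / (5 * ((μ B).toReal + 1)) with hηdef
  have hη : 0 < η := div_pos hr (by positivity)
  have hμBnn : 0 ≤ (μ B).toReal := ENNReal.toReal_nonneg
  filter_upwards [htunif η hη] with n hn
  -- rewrite integrand using w
  have hcongr : (∫⁻ x in B, ENNReal.ofReal |f n x - v x| ∂μ)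
      = ∫⁻ x in B, ENNReal.ofReal |f n x - w x| ∂μ := by
    refine lintegral_congr_ae (ae_restrict_of_ae ?_)
    filter_upwards [hvw] with x hx
    rw [hx]
  show (∫⁻ x in B, ENNReal.ofReal |f n x - v x| ∂μ) ≤ ε
  rw [hcongr]
  -- split B into (B \ t) and t
  have hsplit : (∫⁻ x in B, ENNReal.ofReal |f n x - w x| ∂μ)
      ≤ (∫⁻ x in B \ t, ENNReal.ofReal |f n x - w x| ∂μ)
        + ∫⁻ x in t, ENNReal.ofReal |f n x - w x| ∂μ := by
    refine le_trans (lintegral_mono_set (fun x hx => ?_)) (lintegral_union_le _ _ _)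
    by_cases h : x ∈ t
    · exact Or.inr h
    · exact Or.inl ⟨hx, h⟩
  refine le_trans hsplit ?_
  -- bound on B \ t
  have h1 : (∫⁻ x in B \ t, ENNReal.ofReal |f n x - w x| ∂μ) ≤ ENNReal.ofReal (r / 5) := by
    have : (∫⁻ x in B \ t, ENNReal.ofReal |f n x - w x| ∂μ)
        ≤ ∫⁻ _ in B \ t, ENNReal.ofReal η ∂μ := by
      refine setLIntegral_mono measurable_const fun x hx => ?_
      refine ENNReal.ofReal_le_ofReal ?_
      have := hn x hx
      rw [Real.dist_eq, abs_sub_comm] at this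
      exact this.le
    rw [lintegral_const, Measure.restrict_apply_univ] at this
    refine this.trans ?_
    have hμdiff : μ (B \ t) ≤ ENNReal.ofReal ((μ B).toReal) := by
      rw [ENNReal.ofReal_toReal hBfin.ne]
      exact measure_mono Set.diff_subset
    refine le_trans (mul_le_mul_right hμdiff _) ?_
    rw [← ENNReal.ofReal_mul hη.le]
    refine ENNReal.ofReal_le_ofReal ?_
    rw [hηdef, div_mul_eq_mul_div, div_le_div_iff₀ (by positivity) (by norm_num)]
    nlinarith
  -- bound on t
  have h2 : (∫⁻ x in t, ENNReal.ofReal |f n x - w x| ∂μ)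
      ≤ (∫⁻ x in t, ENNReal.ofReal |f n x| ∂μ) + ∫⁻ x in t, ENNReal.ofReal |w x| ∂μ := by
    have hpt2 : ∀ x, ENNReal.ofReal |f n x - w x|
        ≤ ENNReal.ofReal |f n x| + ENNReal.ofReal |w x| := by
      intro x
      rw [← ENNReal.ofReal_add (abs_nonneg _) (abs_nonneg _)]
      exact ENNReal.ofReal_le_ofReal (abs_sub _ _)
    refine le_trans (lintegral_mono hpt2) ?_
    rw [lintegral_add_left ((hfmeas n).abs.ennreal_ofReal)]
  have htotal : (∫⁻ x in t, ENNReal.ofReal |f n x - w x| ∂μ)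
      ≤ (ENNReal.ofReal (r / 5) + ENNReal.ofReal (r / 5))
        + (ENNReal.ofReal (r / 5) + ENNReal.ofReal (r / 5)) :=
    h2.trans (add_le_add (hfn_t n) hw_t)
  calc (∫⁻ x in B \ t, ENNReal.ofReal |f n x - w x| ∂μ)
        + ∫⁻ x in t, ENNReal.ofReal |f n x - w x| ∂μ
      ≤ ENNReal.ofReal (r / 5) + ((ENNReal.ofReal (r / 5) + ENNReal.ofReal (r / 5))
        + (ENNReal.ofReal (r / 5) + ENNReal.ofReal (r / 5))) := add_le_add h1 htotal
    _ ≤ ENNReal.ofReal r := by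
        have h5 : (0:ℝ) ≤ r / 5 := by positivity
        rw [← ENNReal.ofReal_add h5 h5,
          ← ENNReal.ofReal_add (p := r/5 + r/5) (q := r/5 + r/5) (by linarith) (by linarith),
          ← ENNReal.ofReal_add (p := r/5) (q := r/5 + r/5 + (r/5 + r/5)) h5 (by linarith)]
        exact ENNReal.ofReal_le_ofReal (by linarith)
    _ ≤ ε := hrε
end

section
/- Let P, Q : ℝ → ℝ be continuous with P(t)/Q(t) → 0 both as |t| → ∞ and as t → 0 (with P(0) = 0). Let (u_n) be measurable functions on ℝᴺ with sup_n ∫_{ℝᴺ} |Q(u_n)| dx < ∞, P(u_n(x)) → v(x) a.e., and u_n(x) → 0 as |x| → ∞ uniformly in n (i.e., for every ε > 0 there is R > 0 such that |u_n(x)| ≤ ε for all n and all |x| ≥ R). Then P(u_n) → v in L¹(ℝᴺ). -/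
/-! For every `ε > 0`, `|P (u n)|` is bounded by `ε |Q (u n)|` plus a constant supported on a ball:
`P = o(Q)` at infinity gives the constant (a bound of `|P|` on a compact interval), and `P = o(Q)`
at `0` together with the uniform decay of the `u n` confines it to a ball. As `∫ |Q (u n)|` is
bounded, the family `P ∘ u n` is then uniformly integrable and uniformly tight, and Vitali's
convergence theorem upgrades a.e. convergence to convergence in `L¹`. -/

open MeasureTheory Filter
open scoped ENNReal Topology

theorem ENNReal.exists_pos_ofReal_mul_lt {a b : ℝ≥0∞} (ha : a ≠ ∞) (hb : b ≠ 0) :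
    ∃ ε : ℝ, 0 < ε ∧ ENNReal.ofReal ε * a < b := by
  obtain ⟨n, hn, hna⟩ := ENNReal.exists_nnreal_pos_mul_lt ha hb
  exact ⟨n, hn, by rwa [ENNReal.ofReal_coe_nnreal]⟩

theorem exists_abs_le_mul_abs_add {P Q : ℝ → ℝ} (hP : Continuous P)
    (hPQ : ∀ ε : ℝ, 0 < ε → ∃ M : ℝ, 0 < M ∧ ∀ t : ℝ, M ≤ |t| → |P t| ≤ ε * |Q t|)
    {ε : ℝ} (hε : 0 < ε) : ∃ K : ℝ, ∀ t, |P t| ≤ ε * |Q t| + K := by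
  obtain ⟨M, -, hM⟩ := hPQ ε hε
  obtain ⟨K, hK⟩ := (isCompact_Icc (a := -M) (b := M)).exists_bound_of_continuousOn hP.continuousOn
  refine ⟨max K 0, fun t => ?_⟩
  rcases le_or_gt M |t| with hMt | htM
  · linarith [hM t hMt, le_max_right K 0]
  · have := hK t (abs_le.mp htM.le)
    rw [Real.norm_eq_abs] at this
    nlinarith [le_max_left K 0, abs_nonneg (Q t)]

namespace MeasureTheory

variable {α ι E F : Type*} [MeasurableSpace α] {μ : Measure α}
  [NormedAddCommGroup E] [NormedAddCommGroup F]

def UnifDominated (f : ι → α → E) (g : ι → α → F) (μ : Measure α) : Prop :=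
  ∀ ε : ℝ, 0 < ε → ∃ (K : ℝ) (s : Set α), MeasurableSet s ∧ μ s ≠ ∞ ∧
    ∀ i x, ‖f i x‖ ≤ ε * ‖g i x‖ + s.indicator (fun _ => K) x

theorem eLpNorm_one_indicator_le_of_norm_le {f : α → E} {g : α → F} {ε K : ℝ} {s t : Set α}
    (hε : 0 ≤ ε) (hs : MeasurableSet s) (ht : MeasurableSet t)
    (hfg : ∀ x, ‖f x‖ ≤ ε * ‖g x‖ + s.indicator (fun _ => K) x) :
    eLpNorm (t.indicator f) 1 μ ≤
      ENNReal.ofReal ε * eLpNorm g 1 μ + ENNReal.ofReal K * μ (t ∩ s) := by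
  have hpt : ∀ x, ‖t.indicator f x‖ₑ ≤
      ENNReal.ofReal ε * ‖g x‖ₑ + (t ∩ s).indicator (fun _ => ENNReal.ofReal K) x := by
    intro x
    by_cases hxt : x ∈ t
    · have hind : ENNReal.ofReal (s.indicator (fun _ => K) x) =
          (t ∩ s).indicator (fun _ => ENNReal.ofReal K) x := by
        by_cases hxs : x ∈ s <;> simp [hxt, hxs]
      calc ‖t.indicator f x‖ₑ = ENNReal.ofReal ‖f x‖ := by
            rw [Set.indicator_of_mem hxt, ofReal_norm]
        _ ≤ ENNReal.ofReal (ε * ‖g x‖) + ENNReal.ofReal (s.indicator (fun _ => K) x) :=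
            (ENNReal.ofReal_le_ofReal (hfg x)).trans ENNReal.ofReal_add_le
        _ = _ := by rw [ENNReal.ofReal_mul hε, ofReal_norm, hind]
    · simp [hxt]
  rw [eLpNorm_one_eq_lintegral_enorm, eLpNorm_one_eq_lintegral_enorm]
  calc ∫⁻ x, ‖t.indicator f x‖ₑ ∂μ
      ≤ ∫⁻ x, ENNReal.ofReal ε * ‖g x‖ₑ + (t ∩ s).indicator (fun _ => ENNReal.ofReal K) x ∂μ :=
        lintegral_mono hpt
    _ = ENNReal.ofReal ε * ∫⁻ x, ‖g x‖ₑ ∂μ + ENNReal.ofReal K * μ (t ∩ s) := by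
        rw [lintegral_add_right _ (measurable_const.indicator (ht.inter hs)),
          lintegral_const_mul' _ _ ENNReal.ofReal_ne_top, lintegral_indicator_const (ht.inter hs)]

namespace UnifDominated

variable {f : ι → α → E} {g : ι → α → F} {C : ℝ≥0∞}

theorem unifIntegrable (hfg : UnifDominated f g μ) (hg : ∀ i, eLpNorm (g i) 1 μ ≤ C)
    (hC : C ≠ ∞) : UnifIntegrable f 1 μ := by
  intro η hη
  have hη2 : ENNReal.ofReal η / 2 ≠ 0 := by simpa using hη
  obtain ⟨ε, hε, hεC⟩ := ENNReal.exists_pos_ofReal_mul_lt hC hη2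
  obtain ⟨K, s, hs, -, hK⟩ := hfg ε hε
  obtain ⟨δ, hδ, hδK⟩ := ENNReal.exists_pos_ofReal_mul_lt ENNReal.ofReal_ne_top hη2
  refine ⟨δ, hδ, fun i t ht hμt => ?_⟩
  calc eLpNorm (t.indicator (f i)) 1 μ
      ≤ ENNReal.ofReal ε * eLpNorm (g i) 1 μ + ENNReal.ofReal K * μ (t ∩ s) :=
        eLpNorm_one_indicator_le_of_norm_le hε.le hs ht (hK i)
    _ ≤ ENNReal.ofReal ε * C + ENNReal.ofReal δ * ENNReal.ofReal K := by
        rw [mul_comm (ENNReal.ofReal δ)]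
        gcongr
        · exact hg i
        · exact (measure_mono Set.inter_subset_left).trans hμt
    _ ≤ ENNReal.ofReal η := by
        simpa using add_le_add hεC.le hδK.le

theorem unifTight (hfg : UnifDominated f g μ) (hg : ∀ i, eLpNorm (g i) 1 μ ≤ C)
    (hC : C ≠ ∞) : UnifTight f 1 μ := by
  intro η hη
  obtain ⟨ε, hε, hεC⟩ := ENNReal.exists_pos_ofReal_mul_lt hC (ENNReal.coe_ne_zero.mpr hη.ne')
  obtain ⟨K, s, hs, hμs, hK⟩ := hfg ε hε
  refine ⟨s, hμs, fun i => ?_⟩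
  calc eLpNorm (sᶜ.indicator (f i)) 1 μ
      ≤ ENNReal.ofReal ε * eLpNorm (g i) 1 μ + ENNReal.ofReal K * μ (sᶜ ∩ s) :=
        eLpNorm_one_indicator_le_of_norm_le hε.le hs hs.compl (hK i)
    _ ≤ η := by
        rw [Set.compl_inter_self, measure_empty, mul_zero, add_zero]
        calc ENNReal.ofReal ε * eLpNorm (g i) 1 μ ≤ ENNReal.ofReal ε * C := by gcongr; exact hg i
          _ ≤ η := hεC.le

theorem exists_eLpNorm_le (hfg : UnifDominated f g μ) (hg : ∀ i, eLpNorm (g i) 1 μ ≤ C)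
    (hC : C ≠ ∞) : ∃ B : ℝ≥0∞, B ≠ ∞ ∧ ∀ i, eLpNorm (f i) 1 μ ≤ B := by
  obtain ⟨K, s, hs, hμs, hK⟩ := hfg 1 one_pos
  refine ⟨ENNReal.ofReal 1 * C + ENNReal.ofReal K * μ s, by finiteness, fun i => ?_⟩
  calc eLpNorm (f i) 1 μ = eLpNorm (Set.univ.indicator (f i)) 1 μ := by
        rw [Set.indicator_univ]
    _ ≤ ENNReal.ofReal 1 * eLpNorm (g i) 1 μ + ENNReal.ofReal K * μ (Set.univ ∩ s) :=
        eLpNorm_one_indicator_le_of_norm_le zero_le_one hs MeasurableSet.univ (hK i)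
    _ ≤ _ := by
        rw [Set.univ_inter]
        gcongr
        exact hg i

end UnifDominated

theorem tendsto_eLpNorm_sub_of_unifDominated {f : ℕ → α → E} {g : ℕ → α → F} {v : α → E}
    {C : ℝ≥0∞} (hf : ∀ n, AEStronglyMeasurable (f n) μ) (hfg : UnifDominated f g μ)
    (hg : ∀ n, eLpNorm (g n) 1 μ ≤ C) (hC : C ≠ ∞)
    (hfv : ∀ᵐ x ∂μ, Tendsto (fun n => f n x) atTop (𝓝 (v x))) :
    Tendsto (fun n => eLpNorm (f n - v) 1 μ) atTop (𝓝 0) := by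
  obtain ⟨B, hB, hfB⟩ := hfg.exists_eLpNorm_le hg hC
  have hv : MemLp v 1 μ :=
    ⟨aestronglyMeasurable_of_tendsto_ae atTop hf hfv,
      (Lp.eLpNorm_le_of_ae_tendsto (Eventually.of_forall hfB) hf hfv).trans_lt hB.lt_top⟩
  exact tendsto_Lp_of_tendsto_ae le_rfl ENNReal.one_ne_top hf hv (hfg.unifIntegrable hg hC)
    (hfg.unifTight hg hC) hfv

theorem unifDominated_comp {P Q : ℝ → ℝ} (hP : Continuous P)
    (hPQ_infty : ∀ ε : ℝ, 0 < ε → ∃ M : ℝ, 0 < M ∧ ∀ t : ℝ, M ≤ |t| → |P t| ≤ ε * |Q t|)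
    (hPQ_zero : ∀ ε : ℝ, 0 < ε → ∃ δ : ℝ, 0 < δ ∧ ∀ t : ℝ, |t| ≤ δ → |P t| ≤ ε * |Q t|)
    {u : ι → α → ℝ}
    (hdecay : ∀ δ : ℝ, 0 < δ → ∃ s : Set α, MeasurableSet s ∧ μ s ≠ ∞ ∧ ∀ i, ∀ x ∉ s, |u i x| ≤ δ) :
    UnifDominated (fun i x => P (u i x)) (fun i x => Q (u i x)) μ := by
  intro ε hε
  obtain ⟨K, hK⟩ := exists_abs_le_mul_abs_add hP hPQ_infty hε
  obtain ⟨δ, hδ, hPδ⟩ := hPQ_zero ε hε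
  obtain ⟨s, hs, hμs, hus⟩ := hdecay δ hδ
  refine ⟨K, s, hs, hμs, fun i x => ?_⟩
  simp only [Real.norm_eq_abs]
  by_cases hx : x ∈ s
  · simpa [hx] using hK (u i x)
  · simpa [hx] using hPδ _ (hus i x hx)

end MeasureTheory

theorem strauss_global_general (N : ℕ)
    (P Q : ℝ → ℝ) (hP : Continuous P)
    (hPQ_infty : ∀ ε : ℝ, 0 < ε → ∃ M : ℝ, 0 < M ∧ ∀ t : ℝ, M ≤ |t| → |P t| ≤ ε * |Q t|)
    (hPQ_zero : ∀ ε : ℝ, 0 < ε → ∃ δ : ℝ, 0 < δ ∧ ∀ t : ℝ, |t| ≤ δ → |P t| ≤ ε * |Q t|)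
    (u : ℕ → EuclideanSpace ℝ (Fin N) → ℝ) (hu : ∀ n, Measurable (u n))
    (v : EuclideanSpace ℝ (Fin N) → ℝ)
    (hQbd : ∃ C : ℝ, ∀ n, (∫⁻ x, ENNReal.ofReal |Q (u n x)|) ≤ ENNReal.ofReal C)
    (hconv : ∀ᵐ x : EuclideanSpace ℝ (Fin N),
      Tendsto (fun n => P (u n x)) atTop (𝓝 (v x)))
    (hdecay : ∀ ε : ℝ, 0 < ε → ∃ R : ℝ, 0 < R ∧
      ∀ n, ∀ x : EuclideanSpace ℝ (Fin N), R ≤ ‖x‖ → |u n x| ≤ ε) :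
    Tendsto (fun n => ∫⁻ x, ENNReal.ofReal (|P (u n x) - v x|)) atTop (𝓝 0) := by
  obtain ⟨C, hC⟩ := hQbd
  have hdom : UnifDominated (fun n x => P (u n x)) (fun n x => Q (u n x)) volume := by
    refine unifDominated_comp hP hPQ_infty hPQ_zero fun δ hδ => ?_
    obtain ⟨R, -, hR⟩ := hdecay δ hδ
    exact ⟨Metric.ball 0 R, measurableSet_ball, measure_ball_lt_top.ne,
      fun n x hx => hR n x (by simpa using hx)⟩
  have hQC : ∀ n, eLpNorm (fun x => Q (u n x)) 1 volume ≤ ENNReal.ofReal C := by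
    simpa [eLpNorm_one_eq_lintegral_enorm, Real.enorm_eq_ofReal_abs] using hC
  simpa [eLpNorm_one_eq_lintegral_enorm, Real.enorm_eq_ofReal_abs] using
    tendsto_eLpNorm_sub_of_unifDominated
      (fun n => (hP.measurable.comp (hu n)).aestronglyMeasurable) hdom hQC ENNReal.ofReal_ne_top
      hconv

theorem strauss_global (N : ℕ) (hN : 1 ≤ N)
    (P Q : ℝ → ℝ) (hP : Continuous P) (hQ : Continuous Q) (hP0 : P 0 = 0)
    (hPQ_infty : ∀ ε : ℝ, 0 < ε → ∃ M : ℝ, 0 < M ∧ ∀ t : ℝ, M ≤ |t| → |P t| ≤ ε * |Q t|)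
    (hPQ_zero : ∀ ε : ℝ, 0 < ε → ∃ δ : ℝ, 0 < δ ∧ ∀ t : ℝ, |t| ≤ δ → |P t| ≤ ε * |Q t|)
    (u : ℕ → EuclideanSpace ℝ (Fin N) → ℝ) (hu : ∀ n, Measurable (u n))
    (v : EuclideanSpace ℝ (Fin N) → ℝ)
    (hQbd : ∃ C : ℝ, ∀ n, (∫⁻ x, ENNReal.ofReal |Q (u n x)|) ≤ ENNReal.ofReal C)
    (hconv : ∀ᵐ x : EuclideanSpace ℝ (Fin N),
      Tendsto (fun n => P (u n x)) atTop (𝓝 (v x)))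
    (hdecay : ∀ ε : ℝ, 0 < ε → ∃ R : ℝ, 0 < R ∧
      ∀ n, ∀ x : EuclideanSpace ℝ (Fin N), R ≤ ‖x‖ → |u n x| ≤ ε) :
    Tendsto (fun n => ∫⁻ x, ENNReal.ofReal (|P (u n x) - v x|)) atTop (𝓝 0) :=
  strauss_global_general N P Q hP hPQ_infty hPQ_zero u hu v hQbd hconv hdecay
end

section
/- Let N ≥ 2, s ∈ (0,1) with N > 2s, and let (u_n) ⊂ H^s(ℝᴺ) be a sequence with sup_n [u_n]_{H^s(ℝᴺ)} < ∞ and satisfying ∫_{ℝᴺ} ( |u_n|^{p+1}/(p+1) − u_n²/2 ) dx = 1 for some fixed p ∈ (1, (N+2s)/(N−2s)). Then sup_n ‖u_n‖_{L²(ℝᴺ)} < ∞; consequently sup_n ‖u_n‖_{H^s(ℝᴺ)} < ∞ and sup_n ‖u_n‖_{L^q(ℝᴺ)} < ∞ for every q ∈ [2, 2N/(N−2s)]. -/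
open MeasureTheory
open scoped ENNReal

noncomputable def gagliardo (N : ℕ) (s : ℝ) (u : EuclideanSpace ℝ (Fin N) → ℝ) : ℝ≥0∞ :=
  ∫⁻ x, ∫⁻ y, ENNReal.ofReal (|u x - u y| ^ 2 / ‖x - y‖ ^ ((N : ℝ) + 2 * s))

/-!
The heart of the matter is the fractional Sobolev inequality `∫ |v|^q ≤ C(N, s, [v])` for
`v ∈ L²`, where `q = 2N/(N-2s)`, proved by Maz'ya's truncation method. Cut `v ≥ 0` into the dyadic
layers `min ((v - 2^k)⁺, 2^k)`; their Gagliardo energies add up to at most `[v]`. Outside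
`{v > 2^k}` the `k`-th layer vanishes, on `{v > 2^(k+1)}` it equals `2^k`, so comparing the two
sets on balls of measure `2 |{v > 2^k}|` gives
`4^k |{v > 2^(k+1)}| ≲ [layer_k] |{v > 2^k}|^θ` with `θ = 2s/N`. For `y_k = 2^(kq) |{v > 2^k}|`
this reads `y_(k+1) ≲ [layer_k] y_k^θ`; as `y_k → 0` for `k → -∞` (because `v ∈ L²`), the `y_k`
never exceed the fixed point of `t ↦ c [v] t^θ`, and summing the recursion bounds `∑ y_k`,
which controls `∫ v^q`.

The constraint `∫ G(u_n) = 1 > 0` and `|t|^(p+1)/(p+1) ≤ t²/4 + C |t|^q` then give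
`‖u_n‖₂² ≤ 4C ‖u_n‖_q^q`, and `|t|^r ≤ t² + |t|^q` gives the `Lʳ` bounds for `2 ≤ r ≤ q`.
-/

open Metric Set Filter
open Function (onFun uncurry)
open scoped Topology Interval

noncomputable def fracSobolevExponent (N : ℕ) (s : ℝ) : ℝ := 2 * N / (N - 2 * s)

lemma two_lt_fracSobolevExponent {N : ℕ} {s : ℝ} (hs : 0 < s) (hNs : 2 * s < N) :
    2 < fracSobolevExponent N s := by
  rw [fracSobolevExponent, lt_div_iff₀ (by linarith)]
  linarith

section Layer

def layer (c t : ℝ) : ℝ := min (max (t - c) 0) c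

lemma lipschitzWith_layer (c : ℝ) : LipschitzWith 1 (layer c) :=
  (LipschitzWith.of_dist_le_mul fun x y => by simp [Real.dist_eq]).max_const 0 |>.min_const c

lemma layer_of_le {c t : ℝ} (hc : 0 ≤ c) (h : t ≤ c) : layer c t = 0 := by
  simp only [layer]; grind

lemma layer_of_two_mul_le {c t : ℝ} (hc : 0 ≤ c) (h : 2 * c ≤ t) : layer c t = c := by
  simp only [layer]; grind

lemma ofReal_abs_layer_sub {c : ℝ} (hc : 0 ≤ c) (a b : ℝ) :
    ENNReal.ofReal |layer c b - layer c a| = volume (Ι a b ∩ Ioc c (2 * c)) := by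
  rw [uIoc, Ioc_inter_Ioc, Real.volume_Ioc]
  wlog hab : a ≤ b generalizing a b
  · rw [abs_sub_comm, this b a (le_of_not_ge hab), max_comm a b, min_comm a b]
  have : |layer c b - layer c a| = max (min b (2 * c) - max a c) 0 := by
    simp only [layer]; grind
  rw [min_eq_left hab, max_eq_right hab, this, ENNReal.ofReal_max, ENNReal.ofReal_zero,
    max_eq_left zero_le]

lemma tsum_sq_layer_sub_le (a b : ℝ) :
    ∑' k : ℤ, ENNReal.ofReal ((layer (2 ^ k) b - layer (2 ^ k) a) ^ 2) ≤
      ENNReal.ofReal ((b - a) ^ 2) := by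
  have hsq (x : ℝ) : ENNReal.ofReal (x ^ 2) = ENNReal.ofReal |x| * ENNReal.ofReal |x| := by
    rw [← ENNReal.ofReal_mul (abs_nonneg x), ← sq, sq_abs]
  have hdisj : Pairwise (onFun Disjoint fun k : ℤ => Ι a b ∩ Ioc ((2 : ℝ) ^ k) (2 * 2 ^ k)) := by
    refine (pairwise_disjoint_on _).2 fun j k hjk => ?_
    refine (Ioc_disjoint_Ioc_of_le ?_).mono inter_subset_right inter_subset_right
    rw [← zpow_one_add₀ two_ne_zero]
    exact zpow_le_zpow_right₀ one_le_two (by omega)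
  calc ∑' k : ℤ, ENNReal.ofReal ((layer (2 ^ k) b - layer (2 ^ k) a) ^ 2)
      ≤ ∑' k : ℤ, ENNReal.ofReal |b - a| * ENNReal.ofReal |layer (2 ^ k) b - layer (2 ^ k) a| := by
        gcongr with k
        rw [hsq]
        gcongr ?_ * _
        exact ENNReal.ofReal_le_ofReal <| by
          simpa [Real.dist_eq] using (lipschitzWith_layer _).dist_le_mul b a
    _ = ENNReal.ofReal |b - a| * volume (⋃ k : ℤ, Ι a b ∩ Ioc ((2 : ℝ) ^ k) (2 * 2 ^ k)) := by
        rw [ENNReal.tsum_mul_left,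
          measure_iUnion hdisj fun k => measurableSet_uIoc.inter measurableSet_Ioc]
        simp only [ofReal_abs_layer_sub (zpow_nonneg zero_le_two _)]
    _ ≤ ENNReal.ofReal |b - a| * volume (Ι a b) := by
        gcongr
        exact iUnion_subset fun k => inter_subset_left
    _ = ENNReal.ofReal ((b - a) ^ 2) := by rw [Real.volume_uIoc, hsq]

end Layer

section LevelSets

variable {α : Type*} [MeasurableSpace α] {μ : Measure α}

lemma ofReal_two_zpow (k : ℤ) : ENNReal.ofReal ((2 : ℝ) ^ k) = 2 ^ (k : ℝ) := by
  rw [← Real.rpow_intCast, ← ENNReal.ofReal_rpow_of_pos two_pos, ENNReal.ofReal_ofNat]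

lemma two_rpow_mul_measure_lt_le_lintegral {v : α → ℝ} (hv : Measurable v) (k : ℤ) :
    2 ^ (2 * k : ℝ) * μ {x | (2 : ℝ) ^ k < v x} ≤ ∫⁻ x, ENNReal.ofReal (v x) ^ (2 : ℝ) ∂μ := by
  refine (mul_le_mul_right (measure_mono fun x hx => ?_) _).trans
    (mul_meas_ge_le_lintegral₀ (hv.ennreal_ofReal.pow_const _).aemeasurable _)
  have hx : (2 : ℝ) ^ k < v x := hx
  show 2 ^ (2 * k : ℝ) ≤ ENNReal.ofReal (v x) ^ (2 : ℝ)
  rw [mul_comm, ENNReal.rpow_mul, ← ofReal_two_zpow]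
  gcongr

lemma tendsto_two_rpow_mul_measure_lt_atBot {q : ℝ} (hq : 2 < q) {v : α → ℝ} (hv : Measurable v)
    (hv2 : ∫⁻ x, ENNReal.ofReal (v x) ^ (2 : ℝ) ∂μ ≠ ⊤) :
    Tendsto (fun k : ℤ => 2 ^ (k * q) * μ {x | (2 : ℝ) ^ k < v x}) atBot (𝓝 0) := by
  have hlim : Tendsto (fun k : ℤ => 2 ^ (k * (q - 2)) * ∫⁻ x, ENNReal.ofReal (v x) ^ (2 : ℝ) ∂μ)
      atBot (𝓝 0) := by
    simpa using ENNReal.Tendsto.mul_const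
      ((ENNReal.tendsto_rpow_atBot_of_one_lt_base ENNReal.one_lt_two).comp
        ((tendsto_intCast_atBot_iff.2 tendsto_id).atBot_mul_const (by linarith))) (Or.inr hv2)
  refine tendsto_of_tendsto_of_tendsto_of_le_of_le tendsto_const_nhds hlim (fun _ => bot_le)
    fun k => ?_
  calc 2 ^ (k * q) * μ {x | (2 : ℝ) ^ k < v x}
      = 2 ^ (k * (q - 2)) * (2 ^ (2 * k : ℝ) * μ {x | (2 : ℝ) ^ k < v x}) := by
        rw [← mul_assoc, ← ENNReal.rpow_add _ _ two_ne_zero ENNReal.ofNat_ne_top]; congr 2; ring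
    _ ≤ _ := mul_le_mul_right (two_rpow_mul_measure_lt_le_lintegral hv k) _

lemma lintegral_ofReal_rpow_le_tsum {q : ℝ} (hq : 0 < q) {v : α → ℝ} (hv : Measurable v) :
    ∫⁻ x, ENNReal.ofReal (v x) ^ q ∂μ ≤
      2 ^ q * ∑' k : ℤ, 2 ^ (k * q) * μ {x | (2 : ℝ) ^ k < v x} := by
  have hlevel (k : ℤ) : MeasurableSet {x | (2 : ℝ) ^ k < v x} :=
    measurableSet_lt measurable_const hv
  have hpt (x : α) : ENNReal.ofReal (v x) ^ q ≤
      ∑' k : ℤ, {x | (2 : ℝ) ^ k < v x}.indicator (fun _ => 2 ^ q * 2 ^ (k * q)) x := by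
    rcases le_or_gt (v x) 0 with hx | hx
    · simp [ENNReal.ofReal_of_nonpos hx, ENNReal.zero_rpow_of_pos hq]
    obtain ⟨n, hn, hn'⟩ := exists_mem_Ioc_zpow hx one_lt_two
    refine le_trans ?_ (ENNReal.le_tsum n)
    rw [indicator_of_mem (show x ∈ {x | (2 : ℝ) ^ n < v x} from hn),
      ← ENNReal.rpow_add _ _ two_ne_zero ENNReal.ofNat_ne_top]
    calc ENNReal.ofReal (v x) ^ q ≤ ENNReal.ofReal ((2 : ℝ) ^ (n + 1)) ^ q := by gcongr
      _ = 2 ^ (q + n * q) := by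
        rw [ofReal_two_zpow, ← ENNReal.rpow_mul]; push_cast; ring_nf
  calc ∫⁻ x, ENNReal.ofReal (v x) ^ q ∂μ
      ≤ ∫⁻ x, ∑' k : ℤ, {x | (2 : ℝ) ^ k < v x}.indicator (fun _ => 2 ^ q * 2 ^ (k * q)) x ∂μ :=
        lintegral_mono hpt
    _ = 2 ^ q * ∑' k : ℤ, 2 ^ (k * q) * μ {x | (2 : ℝ) ^ k < v x} := by
        rw [lintegral_tsum fun k => (measurable_const.indicator (hlevel k)).aemeasurable,
          ← ENNReal.tsum_mul_left]
        simp only [lintegral_indicator_const (hlevel _), mul_assoc]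

end LevelSets

lemma Int.forall_of_eventually_atBot {P : ℤ → Prop} (h : ∀ᶠ k in atBot, P k)
    (hP : ∀ k, P k → P (k + 1)) (k : ℤ) : P k := by
  obtain ⟨k₀, hk₀⟩ := eventually_atBot.1 h
  rcases le_total k k₀ with hk | hk
  · exact hk₀ k hk
  · exact Int.leInduction (hk₀ k₀ le_rfl) (fun n _ => hP n) k hk

lemma tsum_le_of_rpow_recursion {θ : ℝ} (hθ0 : 0 < θ) (hθ1 : θ < 1) {y g : ℤ → ℝ≥0∞}
    {c A : ℝ≥0∞} (hcA0 : c * A ≠ 0) (hcA : c * A ≠ ⊤) (hy : Tendsto y atBot (𝓝 0))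
    (hg : ∑' k, g k ≤ A) (hrec : ∀ k, y (k + 1) ≤ c * g k * y k ^ θ) :
    ∑' k, y k ≤ (c * A) ^ (1 - θ)⁻¹ := by
  set Z := (c * A) ^ (1 - θ)⁻¹
  have hZ0 : 0 < Z := ENNReal.rpow_pos (pos_iff_ne_zero.2 hcA0) hcA
  have hfix : c * A * Z ^ θ = Z :=
    calc c * A * Z ^ θ = (c * A) ^ (1 + (1 - θ)⁻¹ * θ) := by
          rw [ENNReal.rpow_add _ _ hcA0 hcA, ENNReal.rpow_one, ENNReal.rpow_mul]
      _ = Z := by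
          have : 1 - θ ≠ 0 := by linarith
          congr 1; field_simp; ring
  have hbound : ∀ k, y k ≤ Z :=
    Int.forall_of_eventually_atBot ((hy.eventually (gt_mem_nhds hZ0)).mono fun _ => le_of_lt)
      fun k hk => calc y (k + 1) ≤ c * g k * y k ^ θ := hrec k
        _ ≤ c * A * Z ^ θ := by gcongr; exact (ENNReal.le_tsum k).trans hg
        _ = Z := hfix
  calc ∑' k, y k = ∑' k, y (k + 1) := (Equiv.addRight (1 : ℤ)).tsum_eq y |>.symm
    _ ≤ ∑' k, c * Z ^ θ * g k := ENNReal.tsum_le_tsum fun k =>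
        (hrec k).trans (by rw [mul_right_comm]; gcongr; exact hbound k)
    _ = c * Z ^ θ * ∑' k, g k := ENNReal.tsum_mul_left
    _ ≤ c * Z ^ θ * A := by gcongr
    _ = Z := by rw [mul_right_comm]; exact hfix

section Gagliardo

variable {N : ℕ} {s : ℝ}

lemma measurable_gagliardo_integrand {v : EuclideanSpace ℝ (Fin N) → ℝ} (hv : Measurable v) :
    Measurable (uncurry fun x y : EuclideanSpace ℝ (Fin N) =>
      ENNReal.ofReal (|v x - v y| ^ 2 / ‖x - y‖ ^ ((N : ℝ) + 2 * s))) := by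
  unfold uncurry
  fun_prop

lemma gagliardo_comp_le {f : ℝ → ℝ} (hf : LipschitzWith 1 f)
    (v : EuclideanSpace ℝ (Fin N) → ℝ) : gagliardo N s (f ∘ v) ≤ gagliardo N s v := by
  refine lintegral_mono fun x => lintegral_mono fun y => ENNReal.ofReal_le_ofReal ?_
  have hfv : |f (v x) - f (v y)| ≤ |v x - v y| := by
    simpa [Real.dist_eq] using hf.dist_le_mul (v x) (v y)
  exact div_le_div_of_nonneg_right (pow_le_pow_left₀ (abs_nonneg _) hfv 2) (by positivity)

lemma gagliardo_congr_ae {v w : EuclideanSpace ℝ (Fin N) → ℝ} (h : v =ᵐ[volume] w) :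
    gagliardo N s v = gagliardo N s w := by
  refine lintegral_congr_ae ?_
  filter_upwards [h] with x hx
  refine lintegral_congr_ae ?_
  filter_upwards [h] with y hy
  rw [hx, hy]

lemma tsum_gagliardo_layer_le {v : EuclideanSpace ℝ (Fin N) → ℝ} (hv : Measurable v) :
    ∑' k : ℤ, gagliardo N s (layer (2 ^ k) ∘ v) ≤ gagliardo N s v := by
  set F : ℤ → EuclideanSpace ℝ (Fin N) → EuclideanSpace ℝ (Fin N) → ℝ≥0∞ := fun k x y =>
    ENNReal.ofReal (|layer (2 ^ k) (v x) - layer (2 ^ k) (v y)| ^ 2 / ‖x - y‖ ^ ((N : ℝ) + 2 * s))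
  have hF (k : ℤ) : Measurable (uncurry (F k)) :=
    measurable_gagliardo_integrand ((lipschitzWith_layer (2 ^ k)).continuous.measurable.comp hv)
  have hsplit (a d : ℝ) :
      ENNReal.ofReal (|a| ^ 2 / d) = ENNReal.ofReal (a ^ 2) * ENNReal.ofReal d⁻¹ := by
    rw [sq_abs, div_eq_mul_inv, ENNReal.ofReal_mul (sq_nonneg a)]
  calc ∑' k : ℤ, gagliardo N s (layer (2 ^ k) ∘ v) = ∑' k : ℤ, ∫⁻ x, ∫⁻ y, F k x y := rfl
    _ = ∫⁻ x, ∫⁻ y, ∑' k : ℤ, F k x y := by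
        rw [← lintegral_tsum fun k => (hF k).lintegral_prod_right.aemeasurable]
        exact lintegral_congr fun x =>
          (lintegral_tsum fun k => (hF k).of_uncurry_left.aemeasurable).symm
    _ ≤ gagliardo N s v := by
        refine lintegral_mono fun x => lintegral_mono fun y => ?_
        simp only [F, hsplit, ENNReal.tsum_mul_right]
        gcongr
        exact tsum_sq_layer_sub_le (v y) (v x)

lemma volume_ball_le_two_mul_volume_ball_diff {E : Type*} [NormedAddCommGroup E]
    [NormedSpace ℝ E] [MeasurableSpace E] [BorelSpace E] [FiniteDimensional ℝ E]
    (μ : Measure E) [μ.IsAddHaarMeasure] {F : Set E} {r : ℝ} (hF : 2 * μ F ≤ μ (ball 0 r))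
    (x : E) : μ (ball 0 r) ≤ 2 * μ (ball x r \ F) := by
  have h : μ (ball 0 r) ≤ μ (ball x r \ F) + μ F :=
    calc μ (ball 0 r) = μ (ball x r) := (Measure.addHaar_ball_center μ x r).symm
      _ ≤ μ (ball x r \ F) + μ F :=
        (measure_mono (subset_sdiff_union _ _)).trans (measure_union_le _ _)
  refine ENNReal.le_of_add_le_add_right (measure_ball_lt_top (μ := μ) (x := 0) (r := r)).ne ?_
  calc μ (ball 0 r) + μ (ball 0 r) = 2 * μ (ball 0 r) := (two_mul _).symm
    _ ≤ 2 * μ (ball x r \ F) + 2 * μ F := by rw [← mul_add]; gcongr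
    _ ≤ 2 * μ (ball x r \ F) + μ (ball 0 r) := by gcongr

lemma ofReal_sq_le_mul_gagliardo_integrand (hs : 0 ≤ s) {w : EuclideanSpace ℝ (Fin N) → ℝ}
    {x y : EuclideanSpace ℝ (Fin N)} {lam r : ℝ} (hlam : 0 ≤ lam) (hy : y ∈ ball x r)
    (hxy : lam ≤ |w x - w y|) :
    ENNReal.ofReal (lam ^ 2) ≤ ENNReal.ofReal (r ^ ((N : ℝ) + 2 * s)) *
      ENNReal.ofReal (|w x - w y| ^ 2 / ‖x - y‖ ^ ((N : ℝ) + 2 * s)) := by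
  have hr : 0 < r := dist_nonneg.trans_lt (mem_ball.1 hy)
  rw [← ENNReal.ofReal_mul (by positivity)]
  refine ENNReal.ofReal_le_ofReal ?_
  rcases eq_or_ne x y with rfl | hne
  · simp only [sub_self, abs_zero] at hxy
    simp [le_antisymm hxy hlam]
  have hd : 0 < ‖x - y‖ := norm_pos_iff.2 (sub_ne_zero.2 hne)
  have hdr : ‖x - y‖ ≤ r := by
    rw [← dist_eq_norm, dist_comm]; exact (mem_ball.1 hy).le
  calc lam ^ 2 ≤ |w x - w y| ^ 2 := by gcongr
    _ = ‖x - y‖ ^ ((N : ℝ) + 2 * s) * (|w x - w y| ^ 2 / ‖x - y‖ ^ ((N : ℝ) + 2 * s)) := by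
      field_simp
    _ ≤ r ^ ((N : ℝ) + 2 * s) * (|w x - w y| ^ 2 / ‖x - y‖ ^ ((N : ℝ) + 2 * s)) := by gcongr

lemma ofReal_sq_mul_volume_mul_le_gagliardo (hs : 0 ≤ s) {w : EuclideanSpace ℝ (Fin N) → ℝ}
    (hw : Measurable w) {A F : Set (EuclideanSpace ℝ (Fin N))} {lam r : ℝ} (hlam : 0 ≤ lam)
    (hFr : 2 * volume F ≤ volume (ball (0 : EuclideanSpace ℝ (Fin N)) r))
    (hAF : ∀ x ∈ A, ∀ y ∉ F, lam ≤ |w x - w y|) :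
    ENNReal.ofReal (lam ^ 2) * volume (ball (0 : EuclideanSpace ℝ (Fin N)) r) * volume A ≤
      2 * ENNReal.ofReal (r ^ ((N : ℝ) + 2 * s)) * gagliardo N s w := by
  set B := volume (ball (0 : EuclideanSpace ℝ (Fin N)) r)
  set R := ENNReal.ofReal (r ^ ((N : ℝ) + 2 * s))
  set Q := fun x y : EuclideanSpace ℝ (Fin N) =>
    ENNReal.ofReal (|w x - w y| ^ 2 / ‖x - y‖ ^ ((N : ℝ) + 2 * s))
  have hQ : Measurable (uncurry Q) := measurable_gagliardo_integrand hw
  have hx : ∀ x ∈ A, ENNReal.ofReal (lam ^ 2) * B ≤ 2 * R * ∫⁻ y, Q x y := by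
    intro x hx
    calc ENNReal.ofReal (lam ^ 2) * B
        ≤ 2 * ∫⁻ _ in ball x r \ F, ENNReal.ofReal (lam ^ 2) := by
          rw [setLIntegral_const, mul_left_comm]
          gcongr
          exact volume_ball_le_two_mul_volume_ball_diff volume hFr x
      _ ≤ 2 * ∫⁻ y in ball x r \ F, R * Q x y :=
          mul_le_mul_right (setLIntegral_mono (hQ.of_uncurry_left.const_mul R) fun y hy =>
            ofReal_sq_le_mul_gagliardo_integrand hs hlam hy.1 (hAF x hx y hy.2)) 2
      _ ≤ 2 * ∫⁻ y, R * Q x y := mul_le_mul_right (setLIntegral_le_lintegral _ _) 2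
      _ = 2 * R * ∫⁻ y, Q x y := by
          rw [lintegral_const_mul' _ _ ENNReal.ofReal_ne_top, mul_assoc]
  calc ENNReal.ofReal (lam ^ 2) * B * volume A
      = ∫⁻ _ in A, ENNReal.ofReal (lam ^ 2) * B := (setLIntegral_const _ _).symm
    _ ≤ ∫⁻ x in A, 2 * R * ∫⁻ y, Q x y :=
        setLIntegral_mono (hQ.lintegral_prod_right.const_mul _) hx
    _ ≤ ∫⁻ x, 2 * R * ∫⁻ y, Q x y := setLIntegral_le_lintegral _ _
    _ = 2 * R * gagliardo N s w :=
        lintegral_const_mul' _ _ (ENNReal.mul_ne_top ENNReal.ofNat_ne_top ENNReal.ofReal_ne_top)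

lemma ofReal_rpow_eq_volume_ball_div (hN : N ≠ 0) {r : ℝ} (hr : 0 < r) (e : ℝ) :
    ENNReal.ofReal (r ^ e) = (volume (ball (0 : EuclideanSpace ℝ (Fin N)) r) /
      volume (ball (0 : EuclideanSpace ℝ (Fin N)) 1)) ^ (e / N) := by
  rw [Measure.addHaar_ball_of_pos volume 0 hr, finrank_euclideanSpace_fin,
    ENNReal.mul_div_cancel_right (measure_ball_pos volume 0 one_pos).ne' measure_ball_lt_top.ne,
    ENNReal.ofReal_rpow_of_pos (by positivity), ← Real.rpow_natCast, ← Real.rpow_mul hr.le,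
    mul_div_cancel₀ _ (Nat.cast_ne_zero.2 hN)]

lemma exists_volume_ball_eq (hN : N ≠ 0) {V : ℝ≥0∞} (hV0 : V ≠ 0) (hV : V ≠ ⊤) :
    ∃ r > 0, volume (ball (0 : EuclideanSpace ℝ (Fin N)) r) = V := by
  have hω0 : volume (ball (0 : EuclideanSpace ℝ (Fin N)) 1) ≠ 0 :=
    (measure_ball_pos volume 0 one_pos).ne'
  have hVω : V / volume (ball (0 : EuclideanSpace ℝ (Fin N)) 1) ≠ ⊤ := ENNReal.div_ne_top hV hω0
  have hρ : 0 < (V / volume (ball (0 : EuclideanSpace ℝ (Fin N)) 1)).toReal :=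
    ENNReal.toReal_pos (ENNReal.div_ne_zero.2 ⟨hV0, measure_ball_lt_top.ne⟩) hVω
  refine ⟨_ ^ ((N : ℝ)⁻¹), Real.rpow_pos_of_pos hρ _, ?_⟩
  rw [Measure.addHaar_ball_of_pos volume 0 (Real.rpow_pos_of_pos hρ _),
    finrank_euclideanSpace_fin, Real.rpow_inv_natCast_pow hρ.le hN, ENNReal.ofReal_toReal hVω,
    ENNReal.div_mul_cancel hω0 measure_ball_lt_top.ne]

lemma two_rpow_mul_volume_lt_le (hN : N ≠ 0) (hs : 0 ≤ s) {v : EuclideanSpace ℝ (Fin N) → ℝ}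
    (hv : Measurable v) (k : ℤ) (hk : volume {x | (2 : ℝ) ^ k < v x} ≠ ⊤) :
    2 ^ (2 * k : ℝ) * volume {x | (2 : ℝ) ^ (k + 1) < v x} ≤
      (2 / volume (ball (0 : EuclideanSpace ℝ (Fin N)) 1)) ^ (1 + 2 * s / N) *
        volume {x | (2 : ℝ) ^ k < v x} ^ (2 * s / N) * gagliardo N s (layer (2 ^ k) ∘ v) := by
  set m := volume {x | (2 : ℝ) ^ k < v x}
  have h2k : (2 : ℝ) ^ (k + 1) = 2 * 2 ^ k := by rw [zpow_add_one₀ two_ne_zero, mul_comm]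
  have hsub : {x | (2 : ℝ) ^ (k + 1) < v x} ⊆ {x | (2 : ℝ) ^ k < v x} := fun x hx => by
    have hx : 2 * (2 : ℝ) ^ k < v x := h2k ▸ hx
    show (2 : ℝ) ^ k < v x
    linarith [zpow_pos (two_pos (α := ℝ)) k]
  rcases eq_or_ne m 0 with hm0 | hm0
  · simp [measure_mono_null hsub hm0]
  have h2m : 2 * m ≠ 0 := mul_ne_zero two_ne_zero hm0
  have h2m' : 2 * m ≠ ⊤ := ENNReal.mul_ne_top ENNReal.ofNat_ne_top hk
  have hlevel : ∀ x ∈ {x | (2 : ℝ) ^ (k + 1) < v x}, ∀ y ∉ {x | (2 : ℝ) ^ k < v x},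
      (2 : ℝ) ^ k ≤ |layer (2 ^ k) (v x) - layer (2 ^ k) (v y)| := by
    intro x hx y hy
    have hx : 2 * (2 : ℝ) ^ k < v x := h2k ▸ hx
    have hy : ¬ (2 : ℝ) ^ k < v y := hy
    rw [layer_of_two_mul_le (by positivity) (by linarith),
      layer_of_le (by positivity) (not_lt.1 hy), sub_zero, abs_of_pos (by positivity)]
  obtain ⟨r, hr, hB⟩ := exists_volume_ball_eq hN h2m h2m'
  have hweak := ofReal_sq_mul_volume_mul_le_gagliardo hs
    ((lipschitzWith_layer _).continuous.measurable.comp hv) (zpow_nonneg zero_le_two k) hB.ge hlevel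
  rw [hB, ofReal_rpow_eq_volume_ball_div hN hr, hB, ENNReal.ofReal_pow (by positivity),
    ofReal_two_zpow, ← ENNReal.rpow_natCast, ← ENNReal.rpow_mul] at hweak
  set ω := volume (ball (0 : EuclideanSpace ℝ (Fin N)) 1)
  have hpow : (2 * m / ω) ^ (((N : ℝ) + 2 * s) / N) =
      m * ((2 / ω) ^ (1 + 2 * s / N) * m ^ (2 * s / N)) := by
    rw [add_div, div_self (Nat.cast_ne_zero.2 hN),
      show 2 * m / ω = 2 / ω * m by simp only [ENNReal.div_eq_inv_mul]; ring,
      ENNReal.mul_rpow_of_nonneg _ _ (by positivity), ENNReal.rpow_add _ _ hm0 hk, ENNReal.rpow_one]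
    ring
  rw [← ENNReal.mul_le_mul_iff_right h2m h2m']
  calc 2 * m * (2 ^ (2 * k : ℝ) * volume {x | (2 : ℝ) ^ (k + 1) < v x})
      = 2 ^ ((k : ℝ) * (2 : ℕ)) * (2 * m) * volume {x | (2 : ℝ) ^ (k + 1) < v x} := by
        push_cast; ring_nf
    _ ≤ _ := hweak
    _ = _ := by rw [hpow]; ring

noncomputable def dyadicConst (N : ℕ) (s : ℝ) : ℝ≥0∞ :=
  2 ^ fracSobolevExponent N s *
    (2 / volume (ball (0 : EuclideanSpace ℝ (Fin N)) 1)) ^ (1 + 2 * s / N)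

lemma dyadicConst_ne_zero : dyadicConst N s ≠ 0 :=
  mul_ne_zero (ENNReal.rpow_pos two_pos ENNReal.ofNat_ne_top).ne' <|
    (ENNReal.rpow_pos (ENNReal.div_pos two_ne_zero measure_ball_lt_top.ne)
      (ENNReal.div_ne_top ENNReal.ofNat_ne_top (measure_ball_pos volume 0 one_pos).ne')).ne'

lemma dyadicConst_ne_top (hs : 0 < s) (hNs : 2 * s < N) : dyadicConst N s ≠ ⊤ :=
  ENNReal.mul_ne_top
    (ENNReal.rpow_ne_top_of_nonneg (zero_le_two.trans (two_lt_fracSobolevExponent hs hNs).le)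
      ENNReal.ofNat_ne_top)
    (ENNReal.rpow_ne_top_of_nonneg (by positivity)
      (ENNReal.div_ne_top ENNReal.ofNat_ne_top (measure_ball_pos volume 0 one_pos).ne'))

lemma two_rpow_mul_volume_lt_succ_le (hs : 0 < s) (hNs : 2 * s < N)
    {v : EuclideanSpace ℝ (Fin N) → ℝ} (hv : Measurable v) (k : ℤ)
    (hk : volume {x | (2 : ℝ) ^ k < v x} ≠ ⊤) :
    2 ^ ((k + 1 : ℤ) * fracSobolevExponent N s) * volume {x | (2 : ℝ) ^ (k + 1) < v x} ≤
      dyadicConst N s * gagliardo N s (layer (2 ^ k) ∘ v) *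
        (2 ^ (k * fracSobolevExponent N s) * volume {x | (2 : ℝ) ^ k < v x}) ^ (2 * s / N) := by
  have hN0 : (0 : ℝ) < N := by linarith
  have hNs0 : (N : ℝ) - 2 * s ≠ 0 := by linarith
  set q := fracSobolevExponent N s
  have hexp : ((k + 1 : ℤ) : ℝ) * q = q + k * q * (2 * s / N) + 2 * k := by
    simp only [q, fracSobolevExponent]; push_cast; field_simp; ring
  have h2 (a b : ℝ) : (2 : ℝ≥0∞) ^ (a + b) = 2 ^ a * 2 ^ b :=
    ENNReal.rpow_add _ _ two_ne_zero ENNReal.ofNat_ne_top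
  rw [hexp, h2, h2, mul_assoc (_ * _), ENNReal.mul_rpow_of_nonneg _ _ (by positivity),
    ← ENNReal.rpow_mul]
  calc _ ≤ 2 ^ q * 2 ^ (k * q * (2 * s / N)) *
        ((2 / volume (ball (0 : EuclideanSpace ℝ (Fin N)) 1)) ^ (1 + 2 * s / N) *
          volume {x | (2 : ℝ) ^ k < v x} ^ (2 * s / N) * gagliardo N s (layer (2 ^ k) ∘ v)) :=
        mul_le_mul_right (two_rpow_mul_volume_lt_le (by exact_mod_cast hN0.ne') hs.le hv k hk) _
    _ = _ := by simp only [dyadicConst, q]; ring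

theorem lintegral_ofReal_rpow_le_of_gagliardo_le (hs : 0 < s) (hNs : 2 * s < N)
    {v : EuclideanSpace ℝ (Fin N) → ℝ} (hv : Measurable v)
    (hv2 : ∫⁻ x, ENNReal.ofReal (v x) ^ (2 : ℝ) ≠ ⊤) {A : ℝ≥0∞} (hA0 : A ≠ 0) (hA : A ≠ ⊤)
    (hvA : gagliardo N s v ≤ A) :
    ∫⁻ x, ENNReal.ofReal (v x) ^ fracSobolevExponent N s ≤
      2 ^ fracSobolevExponent N s * (dyadicConst N s * A) ^ (1 - 2 * s / N)⁻¹ := by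
  have hq := two_lt_fracSobolevExponent hs hNs
  have hm (k : ℤ) : volume {x | (2 : ℝ) ^ k < v x} ≠ ⊤ := fun h => hv2 <| top_le_iff.1 <| by
    simpa [h, ENNReal.mul_top, (ENNReal.rpow_pos two_pos ENNReal.ofNat_ne_top).ne'] using
      two_rpow_mul_measure_lt_le_lintegral (μ := volume) hv k
  calc ∫⁻ x, ENNReal.ofReal (v x) ^ fracSobolevExponent N s
      ≤ 2 ^ fracSobolevExponent N s * ∑' k : ℤ,
          2 ^ (k * fracSobolevExponent N s) * volume {x | (2 : ℝ) ^ k < v x} :=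
        lintegral_ofReal_rpow_le_tsum (by linarith) hv
    _ ≤ _ := by
        gcongr
        exact tsum_le_of_rpow_recursion (div_pos (by linarith) (by linarith))
          ((div_lt_one (by linarith)).2 hNs) (mul_ne_zero dyadicConst_ne_zero hA0)
          (ENNReal.mul_ne_top (dyadicConst_ne_top hs hNs) hA)
          (tendsto_two_rpow_mul_measure_lt_atBot hq hv hv2)
          ((tsum_gagliardo_layer_le hv).trans hvA)
          fun k => two_rpow_mul_volume_lt_succ_le hs hNs hv k (hm k)

theorem exists_lintegral_enorm_rpow_le_of_gagliardo_le (hs : 0 < s) (hNs : 2 * s < N)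
    {A : ℝ≥0∞} (hA : A ≠ ⊤) :
    ∃ C : ℝ≥0∞, C ≠ ⊤ ∧ ∀ u : EuclideanSpace ℝ (Fin N) → ℝ, MemLp u 2 → gagliardo N s u ≤ A →
      ∫⁻ x, ‖u x‖ₑ ^ fracSobolevExponent N s ≤ C := by
  have hA1 : A + 1 ≠ ⊤ := ENNReal.add_ne_top.2 ⟨hA, ENNReal.one_ne_top⟩
  refine ⟨2 ^ fracSobolevExponent N s * (dyadicConst N s * (A + 1)) ^ (1 - 2 * s / N)⁻¹,
    ENNReal.mul_ne_top ?_ ?_, fun u hu huA => ?_⟩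
  · exact ENNReal.rpow_ne_top_of_nonneg
      (zero_le_two.trans (two_lt_fracSobolevExponent hs hNs).le) ENNReal.ofNat_ne_top
  · have : 2 * s / N < 1 := (div_lt_one (by linarith)).2 hNs
    exact ENNReal.rpow_ne_top_of_nonneg (inv_nonneg.2 (by linarith))
      (ENNReal.mul_ne_top (dyadicConst_ne_top hs hNs) hA1)
  set v := fun x => |hu.1.mk u x|
  have hv : Measurable v := hu.1.stronglyMeasurable_mk.measurable.abs
  have huv (q : ℝ) : (fun x => ‖u x‖ₑ ^ q) =ᵐ[volume] fun x => ENNReal.ofReal (v x) ^ q := by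
    filter_upwards [hu.1.ae_eq_mk] with x hx
    rw [hx, Real.enorm_eq_ofReal_abs]
  have hv2 : ∫⁻ x, ENNReal.ofReal (v x) ^ (2 : ℝ) ≠ ⊤ := by
    rw [← lintegral_congr_ae (huv 2)]
    simpa using
      (lintegral_rpow_enorm_lt_top_of_eLpNorm_lt_top two_ne_zero ENNReal.ofNat_ne_top hu.2).ne
  have hvA : gagliardo N s v ≤ A + 1 :=
    calc gagliardo N s v ≤ gagliardo N s (hu.1.mk u) :=
          gagliardo_comp_le (f := abs) (LipschitzWith.of_dist_le_mul fun a b => by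
            simpa [Real.dist_eq] using abs_abs_sub_abs_le_abs_sub a b) _
      _ = gagliardo N s u := (gagliardo_congr_ae hu.1.ae_eq_mk).symm
      _ ≤ A + 1 := huA.trans le_self_add
  rw [lintegral_congr_ae (huv _)]
  exact lintegral_ofReal_rpow_le_of_gagliardo_le hs hNs hv hv2 (by simp) hA1 hvA

end Gagliardo

section Interpolation

variable {α : Type*} [MeasurableSpace α] {μ : Measure α}

lemma exists_abs_rpow_le_mul_sq_add {a b ε : ℝ} (ha : 2 < a) (hab : a ≤ b) (hε : 0 < ε) :
    ∃ C, ∀ t : ℝ, |t| ^ a ≤ ε * t ^ 2 + C * |t| ^ b := by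
  set t₀ := ε ^ (a - 2)⁻¹
  have ht₀ : 0 < t₀ := Real.rpow_pos_of_pos hε _
  refine ⟨t₀ ^ (a - b), fun t => ?_⟩
  have hC : 0 ≤ t₀ ^ (a - b) * |t| ^ b :=
    mul_nonneg (Real.rpow_nonneg ht₀.le _) (Real.rpow_nonneg (abs_nonneg t) _)
  rcases le_or_gt |t| t₀ with ht | ht
  · have hsmall : |t| ^ (a - 2) ≤ ε := by
      refine (Real.rpow_le_rpow (abs_nonneg t) ht (by linarith)).trans_eq ?_
      rw [← Real.rpow_mul hε.le, inv_mul_cancel₀ (by linarith), Real.rpow_one]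
    calc |t| ^ a = |t| ^ (a - 2) * t ^ 2 := by
          rw [← sq_abs, ← Real.rpow_natCast, ← Real.rpow_add' (abs_nonneg t) (by linarith)]
          norm_num
      _ ≤ ε * t ^ 2 := by gcongr
      _ ≤ _ := le_add_of_nonneg_right hC
  · calc |t| ^ a = |t| ^ (a - b) * |t| ^ b := by
          rw [← Real.rpow_add (ht₀.trans ht)]; ring_nf
      _ ≤ t₀ ^ (a - b) * |t| ^ b := mul_le_mul_of_nonneg_right
          (Real.rpow_le_rpow_of_nonpos ht₀ ht.le (by linarith)) (Real.rpow_nonneg (abs_nonneg t) _)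
      _ ≤ _ := le_add_of_nonneg_left (by positivity)

lemma ofReal_abs_rpow (t : ℝ) {q : ℝ} (hq : 0 ≤ q) : ENNReal.ofReal (|t| ^ q) = ‖t‖ₑ ^ q := by
  rw [Real.enorm_eq_ofReal_abs, ENNReal.ofReal_rpow_of_nonneg (abs_nonneg t) hq]

lemma exists_lintegral_enorm_sq_le (μ : Measure α) {p q : ℝ} (hp : 1 < p) (hpq : p + 1 ≤ q) :
    ∃ C : ℝ≥0∞, C ≠ ⊤ ∧ ∀ u : α → ℝ, MemLp u 2 μ →
      Integrable (fun x => |u x| ^ (p + 1) / (p + 1) - u x ^ 2 / 2) μ →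
      0 ≤ ∫ x, (|u x| ^ (p + 1) / (p + 1) - u x ^ 2 / 2) ∂μ →
      ∫⁻ x, ‖u x‖ₑ ^ q ∂μ ≠ ⊤ → ∫⁻ x, ‖u x‖ₑ ^ (2 : ℝ) ∂μ ≤ C * ∫⁻ x, ‖u x‖ₑ ^ q ∂μ := by
  have hp0 : 0 < p + 1 := by linarith
  have hq0 : 0 ≤ q := by linarith
  obtain ⟨C, hC⟩ := exists_abs_rpow_le_mul_sq_add (by linarith : 2 < p + 1) hpq
    (by linarith : 0 < (p + 1) / 4)
  refine ⟨ENNReal.ofReal (4 * C / (p + 1)), ENNReal.ofReal_ne_top, fun u hu hG hG0 hq => ?_⟩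
  have hu2 : Integrable (fun x => u x ^ 2) μ := hu.integrable_sq
  have huq : Integrable (fun x => |u x| ^ q) μ := by
    refine ⟨(hu.1.aemeasurable.abs.pow_const q).aestronglyMeasurable, ?_⟩
    simpa [hasFiniteIntegral_iff_ofReal (ae_of_all _ fun x => Real.rpow_nonneg (abs_nonneg _) q),
      ofReal_abs_rpow _ hq0, lt_top_iff_ne_top] using hq
  have hup : Integrable (fun x => |u x| ^ (p + 1)) μ :=
    ((hG.add (hu2.div_const 2)).mul_const (p + 1)).congr (ae_of_all _ fun x => by
      simp only [Pi.add_apply]; field_simp; ring)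
  have hlow : (p + 1) / 2 * ∫ x, u x ^ 2 ∂μ ≤ ∫ x, |u x| ^ (p + 1) ∂μ := by
    rw [integral_sub (hup.div_const _) (hu2.div_const _), integral_div, integral_div] at hG0
    have := sub_nonneg.1 hG0
    rw [div_le_div_iff₀ two_pos hp0] at this
    linarith
  have hup' : ∫ x, |u x| ^ (p + 1) ∂μ ≤
      (p + 1) / 4 * ∫ x, u x ^ 2 ∂μ + C * ∫ x, |u x| ^ q ∂μ := by
    rw [← integral_const_mul, ← integral_const_mul,
      ← integral_add (hu2.const_mul _) (huq.const_mul _)]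
    exact integral_mono hup ((hu2.const_mul _).add (huq.const_mul _)) fun x => hC (u x)
  have key : ∫ x, u x ^ 2 ∂μ ≤ 4 * C / (p + 1) * ∫ x, |u x| ^ q ∂μ := by
    rw [div_mul_eq_mul_div, le_div_iff₀ hp0]; linarith
  calc ∫⁻ x, ‖u x‖ₑ ^ (2 : ℝ) ∂μ = ENNReal.ofReal (∫ x, u x ^ 2 ∂μ) := by
        rw [ofReal_integral_eq_lintegral_ofReal hu2 (ae_of_all _ fun x => sq_nonneg _)]
        simp only [← sq_abs (u _), ← Real.rpow_two, ofReal_abs_rpow _ zero_le_two]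
    _ ≤ ENNReal.ofReal (4 * C / (p + 1) * ∫ x, |u x| ^ q ∂μ) := ENNReal.ofReal_le_ofReal key
    _ = _ := by
        rw [ENNReal.ofReal_mul' (integral_nonneg fun x => Real.rpow_nonneg (abs_nonneg _) q),
          ofReal_integral_eq_lintegral_ofReal huq
            (ae_of_all _ fun x => Real.rpow_nonneg (abs_nonneg _) q)]
        simp only [ofReal_abs_rpow _ hq0]

lemma ENNReal.rpow_le_rpow_add_rpow (x : ℝ≥0∞) {a q b : ℝ} (haq : a ≤ q) (hqb : q ≤ b) :
    x ^ q ≤ x ^ a + x ^ b := by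
  rcases le_total x 1 with hx | hx
  · exact (ENNReal.rpow_le_rpow_of_exponent_ge hx haq).trans le_self_add
  · exact (ENNReal.rpow_le_rpow_of_exponent_le hx hqb).trans le_add_self

lemma lintegral_enorm_rpow_le_add {E : Type*} [NormedAddCommGroup E] {f : α → E}
    (hf : AEStronglyMeasurable f μ) {a q b : ℝ} (haq : a ≤ q) (hqb : q ≤ b) :
    ∫⁻ x, ‖f x‖ₑ ^ q ∂μ ≤ ∫⁻ x, ‖f x‖ₑ ^ a ∂μ + ∫⁻ x, ‖f x‖ₑ ^ b ∂μ :=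
  (lintegral_mono fun _ => ENNReal.rpow_le_rpow_add_rpow _ haq hqb).trans_eq
    (lintegral_add_left' (hf.enorm.pow_const a) _)

lemma eLpNorm_ofReal_le_of_lintegral_le {E : Type*} [NormedAddCommGroup E] {f : α → E} {q : ℝ}
    (hq : 0 < q) {M : ℝ≥0∞} (h : ∫⁻ x, ‖f x‖ₑ ^ q ∂μ ≤ M) :
    eLpNorm f (ENNReal.ofReal q) μ ≤ M ^ q⁻¹ := by
  rw [eLpNorm_eq_eLpNorm' (by simpa using hq) ENNReal.ofReal_ne_top, ENNReal.toReal_ofReal hq.le,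
    eLpNorm', one_div]
  gcongr

end Interpolation

theorem apriori_bounds_general (N : ℕ) (s : ℝ) (hs : 0 < s)
    (hNs : 2 * s < (N : ℝ)) (p : ℝ) (hp1 : 1 < p)
    (hp2 : p < ((N : ℝ) + 2 * s) / ((N : ℝ) - 2 * s))
    (u : ℕ → EuclideanSpace ℝ (Fin N) → ℝ)
    (hmem : ∀ n, MemLp (u n) 2 volume)
    (hgag : ∃ A : ℝ, ∀ n, gagliardo N s (u n) ≤ ENNReal.ofReal A)
    (hint : ∀ n, Integrable (fun x => |u n x| ^ (p + 1) / (p + 1) - (u n x) ^ 2 / 2) volume)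
    (hconstraint : ∀ n,
      ∫ x : EuclideanSpace ℝ (Fin N), (|u n x| ^ (p + 1) / (p + 1) - (u n x) ^ 2 / 2) = 1) :
    (∃ C : ℝ, ∀ n, eLpNorm (u n) 2 volume ≤ ENNReal.ofReal C) ∧
    (∀ q : ℝ, 2 ≤ q → q ≤ 2 * (N : ℝ) / ((N : ℝ) - 2 * s) →
      ∃ C : ℝ, ∀ n, eLpNorm (u n) (ENNReal.ofReal q) volume ≤ ENNReal.ofReal C) := by
  obtain ⟨A, hA⟩ := hgag
  have hpq : p + 1 ≤ fracSobolevExponent N s := by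
    have hNs0 : 0 < (N : ℝ) - 2 * s := by linarith
    rw [lt_div_iff₀ hNs0] at hp2
    rw [fracSobolevExponent, le_div_iff₀ hNs0]; linarith
  obtain ⟨M, hM, hcrit⟩ :=
    exists_lintegral_enorm_rpow_le_of_gagliardo_le hs hNs ENNReal.ofReal_ne_top
  obtain ⟨C, hC, hsq⟩ :=
    exists_lintegral_enorm_sq_le (volume : Measure (EuclideanSpace ℝ (Fin N))) hp1 hpq
  have hbound (q : ℝ) (h2q : 2 ≤ q) (hq : q ≤ fracSobolevExponent N s) (n : ℕ) :
      ∫⁻ x, ‖u n x‖ₑ ^ q ≤ C * M + M := by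
    have hcn := hcrit (u n) (hmem n) (hA n)
    have hsqn := hsq (u n) (hmem n) (hint n) (by rw [hconstraint n]; exact zero_le_one)
      (ne_top_of_le_ne_top hM hcn)
    exact (lintegral_enorm_rpow_le_add (hmem n).1 h2q hq).trans
      (add_le_add (hsqn.trans (by gcongr)) hcn)
  have hLq (q : ℝ) (h2q : 2 ≤ q) (hq : q ≤ fracSobolevExponent N s) :
      ∃ C' : ℝ, ∀ n, eLpNorm (u n) (ENNReal.ofReal q) volume ≤ ENNReal.ofReal C' :=
    ⟨((C * M + M) ^ q⁻¹).toReal, fun n =>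
      (eLpNorm_ofReal_le_of_lintegral_le (by linarith) (hbound q h2q hq n)).trans
        (ENNReal.ofReal_toReal (by finiteness)).ge⟩
  exact ⟨by simpa using hLq 2 le_rfl (by linarith), hLq⟩

theorem apriori_bounds (N : ℕ) (hN : 2 ≤ N) (s : ℝ) (hs : 0 < s) (hs1 : s < 1)
    (hNs : 2 * s < (N : ℝ)) (p : ℝ) (hp1 : 1 < p)
    (hp2 : p < ((N : ℝ) + 2 * s) / ((N : ℝ) - 2 * s))
    (u : ℕ → EuclideanSpace ℝ (Fin N) → ℝ)
    (hmem : ∀ n, MemLp (u n) 2 volume)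
    (hgag : ∃ A : ℝ, ∀ n, gagliardo N s (u n) ≤ ENNReal.ofReal A)
    (hint : ∀ n, Integrable (fun x => |u n x| ^ (p + 1) / (p + 1) - (u n x) ^ 2 / 2) volume)
    (hconstraint : ∀ n,
      ∫ x : EuclideanSpace ℝ (Fin N), (|u n x| ^ (p + 1) / (p + 1) - (u n x) ^ 2 / 2) = 1) :
    (∃ C : ℝ, ∀ n, eLpNorm (u n) 2 volume ≤ ENNReal.ofReal C) ∧
    (∀ q : ℝ, 2 ≤ q → q ≤ 2 * (N : ℝ) / ((N : ℝ) - 2 * s) →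
      ∃ C : ℝ, ∀ n, eLpNorm (u n) (ENNReal.ofReal q) volume ≤ ENNReal.ofReal C) :=
  apriori_bounds_general N s hs hNs p hp1 hp2 u hmem hgag hint hconstraint
end
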